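/- Let k be a field of characteristic 2, G = C2 × C2 = ⟨g⟩ × ⟨h⟩, and let w be the 2-dimensional kG-module on which g acts trivially and h acts by the regular representation of C2. Let Ω(k) denote the augmentation ideal of kG. Then Hom_w(k, Ω(k)) = 0; that is, every kG-homomorphism from the trivial module k into Ω(k) factors through a w-projective module. (Hence the simple module k does not detect Ω(k) in the relatively stable category, so the simple modules do not generate StMod_w(kG).) -/

import Mathlib

open CategoryTheory MonoidalCategory Limits

/-- `X` is `w`-projective: `X` is a direct summand of `w ⊗ Y` (diagonal `G`-action)
for some `kG`-module `Y`. -/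
def IsRelProjective {k G : Type} [Field k] [Group G] (w X : Rep k G) : Prop :=
  ∃ (Y : Rep k G) (i : X ⟶ w ⊗ Y) (r : w ⊗ Y ⟶ X), i ≫ r = 𝟙 X

/-- `f` factors through some `w`-projective module. -/
def FactorsThroughRelProj {k G : Type} [Field k] [Group G] (w : Rep k G)
    {X Y : Rep k G} (f : X ⟶ Y) : Prop :=
  ∃ (Z : Rep k G) (g : X ⟶ Z) (h : Z ⟶ Y), IsRelProjective w Z ∧ g ≫ h = f

/-- The cyclic group of order 2. -/
abbrev CycTwo : Type := Multiplicative (ZMod 2)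

/-- The Klein four group `G = C2 × C2 = ⟨g⟩ × ⟨h⟩`. -/
abbrev KleinFour : Type := CycTwo × CycTwo

/-- The 2-dimensional `kG`-module `k[C2]` on which the first factor `⟨g⟩` of the Klein
four group acts trivially and the second factor `⟨h⟩` acts by the regular
representation of `C2`; i.e. `w ≅ Ind_{⟨g⟩×1}^G (k)`. -/
noncomputable def wKlein (k : Type) [Field k] : Rep k KleinFour :=
  Rep.of ((Representation.ofMulAction k CycTwo CycTwo).comp (MonoidHom.snd CycTwo CycTwo))

/-- The regular module `kG` (the group algebra with the left regular action). -/
noncomputable def regRep (k G : Type) [Field k] [Group G] : Rep k G :=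
  Rep.of (Representation.ofMulAction k G G)

/-- The augmentation map `kG → k`, sending each group element to `1`, as a morphism
of representations. -/
noncomputable def augmentation (k G : Type) [Field k] [Group G] :
    regRep k G ⟶ Rep.trivial k G k :=
  Rep.ofHom
  { toLinearMap := Finsupp.linearCombination k (fun _ => (1 : k)) ∘ₗ
      (MonoidAlgebra.coeffLinearEquiv k).toLinearMap
    isIntertwining' := fun g => by
      refine MonoidAlgebra.lhom_ext' fun a => ?_
      ext
      simp [Representation.ofMulAction_single, MonoidAlgebra.coeffLinearEquiv] }

/-- `Ω(k)`: the augmentation ideal of `kG`, the kernel of the augmentation `kG → k`. -/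
noncomputable def augIdeal (k G : Type) [Field k] [Group G] : Rep k G :=
  kernel (augmentation k G)

/-!
A morphism `k ⟶ Ω(k)` is determined by a `G`-fixed vector of `kG`, i.e. by a multiple `c • N_G`
of the sum of all group elements. For `G = H × K`, summing over the fibres of the projection to
`K` gives a `G`-map `k[K] ⟶ kG`, `a ↦ ∑ h, (h, a)`, whose composite with the augmentation is
multiplication by `|H|`; when `|H| = 0` in `k` it lands in `Ω(k)`, and it sends `c • N_K` to
`c • N_G`. So the morphism factors through `k[K]`, which is trivially relatively projective over
itself since `k[K] ≅ k[K] ⊗ 𝟙`.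
-/

lemma isRelProjective_self {k G : Type} [Field k] [Group G] (w : Rep k G) :
    IsRelProjective w w :=
  ⟨𝟙_ (Rep k G), (ρ_ w).inv, (ρ_ w).hom, (ρ_ w).inv_hom_id⟩

lemma factorsThroughRelProj_of_comp_kernel_ι {k G : Type} [Field k] [Group G]
    {w X Y Z : Rep k G} {g : Y ⟶ Z} (f : X ⟶ kernel g) (a : X ⟶ w) (b : w ⟶ Y)
    (hb : b ≫ g = 0) (h : f ≫ kernel.ι g = a ≫ b) : FactorsThroughRelProj w f :=
  ⟨w, a, kernel.lift g b hb, isRelProjective_self w,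
    (cancel_mono (kernel.ι g)).1 (by rw [Category.assoc, kernel.lift_ι, h])⟩

section Invariants

variable {k G : Type} [CommRing k] [Group G]

noncomputable def Rep.homOfMemInvariants (A : Rep k G) (v : A) (hv : v ∈ A.ρ.invariants) :
    Rep.trivial k G k ⟶ A :=
  Rep.ofHom ⟨LinearMap.toSpanSingleton k _ v, fun g => LinearMap.ext_ring (by simp [hv g])⟩

@[simp]
lemma Rep.homOfMemInvariants_hom_one (A : Rep k G) (v : A) (hv : v ∈ A.ρ.invariants) :
    (A.homOfMemInvariants v hv).hom (1 : k) = v := by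
  simp [Rep.homOfMemInvariants]

lemma Rep.hom_one_mem_invariants {A : Rep k G} (f : Rep.trivial k G k ⟶ A) :
    f.hom (1 : k) ∈ A.ρ.invariants := fun g => by
  simpa using (Rep.hom_comm_apply f g 1).symm

lemma Rep.hom_ext_trivial {A : Rep k G} {f f' : Rep.trivial k G k ⟶ A}
    (h : f.hom (1 : k) = f'.hom 1) : f = f' :=
  Rep.hom_ext (Representation.IntertwiningMap.ext (LinearMap.ext_ring h))

lemma Representation.coeff_eq_coeff_one_of_mem_invariants {v : MonoidAlgebra k G}
    (hv : v ∈ (Representation.ofMulAction k G G).invariants) (x : G) :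
    v.coeff x = v.coeff 1 := by
  simpa using (congrArg (MonoidAlgebra.coeff · x) (hv x)).symm

lemma Representation.sum_single_one_mem_invariants [Fintype G] :
    ∑ g : G, MonoidAlgebra.single g (1 : k) ∈ (Representation.ofMulAction k G G).invariants :=
  fun g => by
    simpa [map_sum] using Equiv.sum_comp (Equiv.mulLeft g) (MonoidAlgebra.single · (1 : k))

lemma Representation.eq_coeff_one_smul_sum_single_of_mem_invariants [Fintype G]
    {v : MonoidAlgebra k G} (hv : v ∈ (Representation.ofMulAction k G G).invariants) :
    v = v.coeff 1 • ∑ g : G, MonoidAlgebra.single g (1 : k) := by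
  ext x
  simp [coeff_eq_coeff_one_of_mem_invariants hv x]

end Invariants

lemma sum_single_one_mem_invariants_comp_snd {k H K : Type} [CommRing k] [Group H] [Group K]
    [Fintype K] :
    ∑ a : K, MonoidAlgebra.single a (1 : k) ∈
      Representation.invariants ((Representation.ofMulAction k K K).comp (MonoidHom.snd H K)) :=
  fun g => Representation.sum_single_one_mem_invariants g.2

section FiberSum

variable (k : Type) [CommRing k] (H K : Type) [Fintype H]

noncomputable def fiberSum : MonoidAlgebra k K →ₗ[k] MonoidAlgebra k (H × K) :=
  ∑ h : H, MonoidAlgebra.mapDomainLinearMap k k (fun a => (h, a))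

variable {k H K}

lemma fiberSum_single (a : K) (b : k) :
    fiberSum k H K (MonoidAlgebra.single a b) = ∑ h : H, MonoidAlgebra.single (h, a) b := by
  simp [fiberSum]

lemma fiberSum_sum_single_one [Fintype K] :
    fiberSum k H K (∑ a : K, MonoidAlgebra.single a 1) =
      ∑ x : H × K, MonoidAlgebra.single x 1 := by
  simp [map_sum, fiberSum_single, Fintype.sum_prod_type_right]

variable (k H K) [Group H] [Group K]

noncomputable def fiberSumHom :
    Rep.of ((Representation.ofMulAction k K K).comp (MonoidHom.snd H K)) ⟶
      Rep.of (Representation.ofMulAction k (H × K) (H × K)) :=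
  Rep.ofHom
  { toLinearMap := fiberSum k H K
    isIntertwining' := fun g => MonoidAlgebra.lhom_ext' fun a => LinearMap.ext fun b => by
      simpa [fiberSum_single, map_sum, Prod.mul_def] using
        (Equiv.sum_comp (Equiv.mulLeft g.1) fun h => MonoidAlgebra.single (h, g.2 * a) b).symm }

@[simp]
lemma fiberSumHom_hom_apply (x : MonoidAlgebra k K) :
    (fiberSumHom k H K).hom x = fiberSum k H K x :=
  rfl

end FiberSum

lemma fiberSumHom_comp_augmentation {k H K : Type} [Field k] [Group H] [Group K] [Fintype H]
    (hH : (Fintype.card H : k) = 0) :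
    fiberSumHom k H K ≫ augmentation k (H × K) = 0 := by
  refine Rep.hom_ext (Representation.IntertwiningMap.ext
    (MonoidAlgebra.lhom_ext' fun a => LinearMap.ext fun b => ?_))
  simp [fiberSumHom, augmentation, fiberSum_single, MonoidAlgebra.coeffLinearEquiv, hH]

lemma eq_homOfMemInvariants_comp_fiberSumHom {k H K : Type} [CommRing k] [Group H] [Group K]
    [Fintype H] [Fintype K]
    (F : Rep.trivial k (H × K) k ⟶ Rep.of (Representation.ofMulAction k (H × K) (H × K))) :
    F = Rep.homOfMemInvariants _ _ (Submodule.smul_mem _ ((F.hom (1 : k)).coeff 1)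
      sum_single_one_mem_invariants_comp_snd) ≫ fiberSumHom k H K :=
  Rep.hom_ext_trivial <| by
    simp only [Rep.hom_comp, Representation.IntertwiningMap.comp_apply]
    rw [Rep.homOfMemInvariants_hom_one, map_smul, fiberSumHom_hom_apply, fiberSum_sum_single_one]
    exact Representation.eq_coeff_one_smul_sum_single_of_mem_invariants
      (Rep.hom_one_mem_invariants F)

theorem factorsThroughRelProj_of_trivial_to_augIdeal {k H K : Type} [Field k] [Group H]
    [Group K] [Fintype H] [Fintype K] (hH : (Fintype.card H : k) = 0)
    (f : Rep.trivial k (H × K) k ⟶ augIdeal k (H × K)) :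
    FactorsThroughRelProj (Rep.of ((Representation.ofMulAction k K K).comp (MonoidHom.snd H K)))
      f :=
  factorsThroughRelProj_of_comp_kernel_ι f _ _ (fiberSumHom_comp_augmentation hH)
    (eq_homOfMemInvariants_comp_fiberSumHom _)

/-- Over the Klein four group in characteristic 2, with `w = Ind_{⟨g⟩×1}^G(k)`,
`Hom_w(k, Ω(k)) = 0`: every `kG`-homomorphism from the trivial module `k` into
`Ω(k)` factors through a `w`-projective module. -/
theorem homW_trivial_omega_eq_zero (k : Type) [Field k] [CharP k 2] :
    ∀ f : Rep.trivial k KleinFour k ⟶ augIdeal k KleinFour,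
      FactorsThroughRelProj (wKlein k) f :=
  factorsThroughRelProj_of_trivial_to_augIdeal (CharP.cast_eq_zero k 2)
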